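/- arXiv:2302.03797 — 4 statements merged into one kernel-verified Lean document; each statement's English description precedes it below -/
import Mathlib

section
/- Performing a symmetric reversal on a chromosome preserves its multiset of adjacencies. That is, if π' is obtained from π by a symmetric reversal, then A[π] = A[π']. -/
open List

variable {α : Type*}

/-- A signed symbol: (name, orientation); `true` means positive. -/
abbrev SSym (α : Type*) := α × Bool

/-- Negation (orientation flip) of a signed symbol. -/
def symNeg (x : SSym α) : SSym α := (x.1, !x.2)

/-- Left node of an occurrence: a node `(a, true)` denotes the head `aʰ`,
and `(a, false)` denotes the tail `aᵗ`; a positive occurrence contributes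
`(aʰ, aᵗ)`, a negative one `(aᵗ, aʰ)`. -/
def lnode (x : SSym α) : SSym α := x

/-- Right node of an occurrence. -/
def rnode (x : SSym α) : SSym α := (x.1, !x.2)

/-- The unordered adjacency between two consecutive occurrences. -/
def adjOf (u v : SSym α) : Multiset (SSym α) := {rnode u, lnode v}

/-- The multiset of adjacencies of a chromosome. -/
def adjMS : List (SSym α) → Multiset (Multiset (SSym α))
  | u :: v :: rest => adjOf u v ::ₘ adjMS (v :: rest)
  | _ => 0

/-- Reversed and negated form of a segment. -/
def revneg (s : List (SSym α)) : List (SSym α) := (s.map symNeg).reverse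

/-- One symmetric reversal: the reversed segment is flanked by a pair of
inverted occurrences of the same repeat. -/
def SymRev (π π' : List (SSym α)) : Prop :=
  ∃ (p m q : List (SSym α)) (x : SSym α),
    π = p ++ x :: m ++ symNeg x :: q ∧
    π' = p ++ x :: revneg m ++ symNeg x :: q

/-- A symmetric reversal performed on the repeat `a`. -/
def SymRevOn (a : α) (π π' : List (SSym α)) : Prop :=
  ∃ (p m q : List (SSym α)) (x : SSym α), x.1 = a ∧
    π = p ++ x :: m ++ symNeg x :: q ∧
    π' = p ++ x :: revneg m ++ symNeg x :: q

/-- `π` can be transformed into `τ` by a series of symmetric reversals. -/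
def Transformable (π τ : List (SSym α)) : Prop := Relation.ReflTransGen SymRev π τ

/-- `π` can be transformed into `τ` by exactly `m` symmetric reversals. -/
def ChainRev : ℕ → List (SSym α) → List (SSym α) → Prop
  | 0, π, τ => π = τ
  | n + 1, π, τ => ∃ π', SymRev π π' ∧ ChainRev n π' τ

/-- A chromosome is flanked by `+r₀` and `-r₀`. -/
def IsChromosome (r₀ : α) (π : List (SSym α)) : Prop :=
  ∃ m : List (SSym α), π = (r₀, true) :: m ++ [(r₀, false)]

/-- Duplication number of symbol `a` in `π` (occurrences in both orientations). -/
def dpCount [DecidableEq α] (a : α) (π : List (SSym α)) : ℕ := (π.map Prod.fst).count a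

/-- Related chromosomes: identical duplication numbers for every gene/repeat. -/
def Related [DecidableEq α] (π τ : List (SSym α)) : Prop := ∀ a, dpCount a π = dpCount a τ

/-- A chromosome is simple if every adjacency appears only once. -/
def Simple [DecidableEq α] (π : List (SSym α)) : Prop := ∀ A, (adjMS π).count A ≤ 1

/-- Deletion of all occurrences of the repeat `b`. -/
def delSym [DecidableEq α] (b : α) (π : List (SSym α)) : List (SSym α) :=
  π.filter fun x => decide (x.1 ≠ b)

/-- The repeat `a` is neighbor-consistent: the two adjacencies flanking any of its
occurrences in `π` are matched to the two adjacencies flanking a single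
occurrence of `a` in `τ`. -/
def NeighborConsistent (π τ : List (SSym α)) (a : α) : Prop :=
  ∀ (p q : List (SSym α)) (u x v : SSym α),
    π = p ++ u :: x :: v :: q → x.1 = a →
    ∃ (p' q' : List (SSym α)) (u' y v' : SSym α),
      τ = p' ++ u' :: y :: v' :: q' ∧ y.1 = a ∧
      ({adjOf u x, adjOf x v} : Multiset (Multiset (SSym α))) =
        {adjOf u' y, adjOf y v'}

/-- The repeat `a` is black in `IG(π, τ)`: its two occurrences in `π`
have opposite signs. -/
def Black (π : List (SSym α)) (a : α) : Prop :=
  ∃ (p q r : List (SSym α)) (x y : SSym α),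
    π = p ++ x :: q ++ y :: r ∧ x.1 = a ∧ y.1 = a ∧ x.2 ≠ y.2

/-- The occurrence intervals of the repeats `a` and `b` interleave in `π`
(the adjacency relation of the intersection graph `IG(π, τ)`). -/
def Interleaves (π : List (SSym α)) (a b : α) : Prop :=
  a ≠ b ∧ ∃ (p q r s t : List (SSym α)) (x y x' y' : SSym α),
    x.1 = a ∧ x'.1 = a ∧ y.1 = b ∧ y'.1 = b ∧
    (π = p ++ x :: q ++ y :: r ++ x' :: s ++ y' :: t ∨
     π = p ++ y :: q ++ x :: r ++ y' :: s ++ x' :: t)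

/-- Two repeats are in the same connected component of the intersection graph. -/
def InSameComponent (π : List (SSym α)) : α → α → Prop :=
  Relation.ReflTransGen (Interleaves π)

/-- An abstract vertex-colored, vertex-weighted graph (intersection graph). -/
structure ColoredGraph (V : Type*) where
  adj : V → V → Prop
  black : V → Prop
  weight : V → ℕ

/-- The effect of performing a symmetric reversal on a black vertex `x`:
(rule-I) the colors of all neighbors of `x` are toggled; (rule-II) adjacency
among the neighbors of `x` is complemented; (rule-III) the weight of `x`
is decremented (and `x` is deleted when the weight reaches `0`). -/
def reverseAt {V : Type*} [DecidableEq V] (G : ColoredGraph V) (x : V) :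
    ColoredGraph V where
  adj u v := (G.adj x u ∧ G.adj x v ∧ ¬ G.adj u v ∧ u ≠ v) ∨
    (¬ (G.adj x u ∧ G.adj x v) ∧ G.adj u v)
  black v := (G.adj x v ∧ ¬ G.black v) ∨ (¬ G.adj x v ∧ G.black v)
  weight v := if v = x then G.weight v - 1 else G.weight v

/-- Reachability in a colored graph avoiding deleted (`dead`) vertices. -/
def Reach {V : Type*} (G : ColoredGraph V) (dead : V → Prop) : V → V → Prop :=
  Relation.ReflTransGen (fun u v => G.adj u v ∧ ¬ dead u ∧ ¬ dead v)

/-- The 2-balanced condition: any two occurrences of the same repeat in `τ`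
have opposite signs. -/
def BalancedTarget (τ : List (SSym α)) : Prop :=
  ∀ (p q r : List (SSym α)) (x y : SSym α),
    τ = p ++ x :: q ++ y :: r → x.1 = y.1 → x.2 ≠ y.2

/-- The adjacency `⟨u, v⟩` of `π` is positive: it is matched to an adjacency
`⟨y_j, y_{j+1}⟩` of `τ` with `r(u) = r(y_j)` and `l(v) = l(y_{j+1})`, i.e.
`τ` contains the consecutive pair `u v` literally. -/
def PosIn (τ : List (SSym α)) (u v : SSym α) : Prop :=
  ∃ p q : List (SSym α), τ = p ++ u :: v :: q

/-- The adjacency `⟨u, v⟩` of `π` is negative: `τ` contains its reversed and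
negated form. -/
def NegIn (τ : List (SSym α)) (u v : SSym α) : Prop := PosIn τ (symNeg v) (symNeg u)

/-- Positive and not entangled. -/
def StrictPos (τ : List (SSym α)) (u v : SSym α) : Prop := PosIn τ u v ∧ ¬ NegIn τ u v

/-- Negative and not entangled. -/
def StrictNeg (τ : List (SSym α)) (u v : SSym α) : Prop := NegIn τ u v ∧ ¬ PosIn τ u v

/-- An entangled adjacency can be read both positively and negatively. -/
def EntangledAdj (τ : List (SSym α)) (u v : SSym α) : Prop := PosIn τ u v ∧ NegIn τ u v

/-- The occurrence `x` (with left neighbor `w` and right neighbor `v`) is a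
boundary: its left and right adjacencies have distinct directions. -/
def IsBoundary (τ : List (SSym α)) (w x v : SSym α) : Prop :=
  (StrictPos τ w x ∧ StrictNeg τ x v) ∨ (StrictNeg τ w x ∧ StrictPos τ x v)

/-- The list of consecutive pairs (adjacencies) of a chromosome. -/
def pairsOf (π : List (SSym α)) : List (SSym α × SSym α) := π.zip π.tail

/-- A direction assignment (`true` = positive) compatible with the bijection
between the adjacencies of `π` and `τ`. -/
def DirOK (τ π : List (SSym α)) (d : List Bool) : Prop :=
  List.Forall₂ (fun (pr : SSym α × SSym α) (b : Bool) =>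
    (b = true → PosIn τ pr.1 pr.2) ∧ (b = false → NegIn τ pr.1 pr.2)) (pairsOf π) d

/-- Number of maximal `false`-runs (maximal negative segments). -/
def nMNSAux : Bool → List Bool → ℕ
  | _, [] => 0
  | prev, b :: rest => (if prev = true ∧ b = false then 1 else 0) + nMNSAux b rest

def nMNS (d : List Bool) : ℕ := nMNSAux true d

/-- `N_MNS[π]`: the number of maximal negative segments of `π` relative to `τ`
(entangled adjacencies assigned so that the number of MNS is minimized,
i.e. taking the common direction of their neighbors). -/
noncomputable def NMNS (π τ : List (SSym α)) : ℕ :=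
  sInf { n | ∃ d : List Bool, DirOK τ π d ∧ n = nMNS d }

/-- A node position of the alternative-cycle graph: `(i, false)` is the left
node of the `i`-th occurrence of `π`, `(i, true)` its right node. -/
abbrev NodePos := ℕ × Bool

/-- The value (as a node of the form `aʰ`/`aᵗ`) sitting at a node position. -/
def nodeVal (π : List (SSym α)) (p : NodePos) : Option (SSym α) :=
  (π[p.1]?).map fun x => if p.2 then rnode x else lnode x

/-- The adjacency of `π` between positions `i` and `i+1`, if any. -/
def adjAt (π : List (SSym α)) (i : ℕ) : Option (Multiset (SSym α)) :=
  match π[i]?, π[i+1]? with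
  | some u, some v => some (adjOf u v)
  | _, _ => none

/-- `f` is a bijection matching each adjacency of `τ` with an identical
adjacency of `π`. -/
def AdjBijection (π τ : List (SSym α)) (f : ℕ → ℕ) : Prop :=
  Set.BijOn f (Set.Iio (τ.length - 1)) (Set.Iio (π.length - 1)) ∧
  ∀ k < τ.length - 1, adjAt τ k = adjAt π (f k)

/-- The blue edge of `ACG(π, τ, f)` corresponding to the `k`-th occurrence of
`τ`: it joins the node of the `f`-image of the adjacency on the left of `y_k`
carrying the value `l(y_k)` with the node of the `f`-image of the adjacency on
the right of `y_k` carrying the value `r(y_k)`. -/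
def IsBlueEdge (π τ : List (SSym α)) (f : ℕ → ℕ) (k : ℕ) (e₁ e₂ : NodePos) : Prop :=
  ∃ y : SSym α, τ[k]? = some y ∧
    (if k = 0 then e₁ = (0, false)
     else (e₁ = (f (k-1), true) ∨ e₁ = (f (k-1) + 1, false)) ∧
       nodeVal π e₁ = some (lnode y)) ∧
    (if k = τ.length - 1 then e₂ = (π.length - 1, true)
     else (e₂ = (f k, true) ∨ e₂ = (f k + 1, false)) ∧
       nodeVal π e₂ = some (rnode y))

/-- A green edge joins `r(x_i)` and `l(x_{i+1})` (an adjacency of `π`). -/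
def GreenEdge (p q : NodePos) : Prop :=
  (p.2 = true ∧ q = (p.1 + 1, false)) ∨ (q.2 = true ∧ p = (q.1 + 1, false))

/-- A step along a blue or a green edge. -/
def BGStep (π τ : List (SSym α)) (f : ℕ → ℕ) (p q : NodePos) : Prop :=
  GreenEdge p q ∨ ∃ k, IsBlueEdge π τ f k p q ∨ IsBlueEdge π τ f k q p

/-!
Reading a segment backwards with every sign flipped turns each adjacency `⟨r(u), l(v)⟩` into
`⟨r(-v), l(-u)⟩ = ⟨l(v), r(u)⟩`, the same unordered pair. A symmetric reversal replaces the
segment `x m (-x)` by exactly this reversed negation, since `-(-x) = x`, and keeps everything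
outside it, so the adjacencies are unchanged.
-/

theorem symNeg_symNeg (x : SSym α) : symNeg (symNeg x) = x := by
  simp [symNeg]

theorem adjOf_symNeg_symNeg (u v : SSym α) : adjOf (symNeg v) (symNeg u) = adjOf u v := by
  simpa [adjOf, lnode, rnode, symNeg] using Multiset.pair_comm (v.1, v.2) (u.1, !u.2)

theorem revneg_cons (a : SSym α) (l : List (SSym α)) :
    revneg (a :: l) = revneg l ++ [symNeg a] := by
  simp [revneg]

theorem revneg_append_singleton (l : List (SSym α)) (a : SSym α) :
    revneg (l ++ [a]) = symNeg a :: revneg l := by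
  simp [revneg]

theorem adjMS_append_cons (l r : List (SSym α)) (u : SSym α) :
    adjMS (l ++ u :: r) = adjMS (l ++ [u]) + adjMS (u :: r) := by
  induction l with
  | nil => simp [adjMS]
  | cons a l ih =>
    cases l with
    | nil => simp [adjMS]
    | cons b l =>
      simp only [cons_append, adjMS] at ih ⊢
      rw [ih, Multiset.cons_add]

theorem adjMS_revneg (l : List (SSym α)) : adjMS (revneg l) = adjMS l := by
  induction l with
  | nil => rfl
  | cons a l ih =>
    cases l with
    | nil => rfl
    | cons b l =>
      have hpair : adjMS [symNeg b, symNeg a] = {adjOf a b} := by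
        simp [adjMS, adjOf_symNeg_symNeg]
      rw [revneg_cons, revneg_cons, append_assoc, singleton_append, adjMS_append_cons,
        ← revneg_cons, ih, hpair, adjMS, add_comm, Multiset.singleton_add]

theorem adjMS_append_cons_append_cons (p s q : List (SSym α)) (x y : SSym α) :
    adjMS (p ++ x :: s ++ y :: q) = adjMS (p ++ [x]) + adjMS (x :: s ++ [y]) + adjMS (y :: q) := by
  have hx := adjMS_append_cons p (s ++ y :: q) x
  have hy := adjMS_append_cons (x :: s) q y
  simp only [append_assoc, cons_append] at hx hy ⊢
  rw [hx, hy, add_assoc]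

/-- a symmetric reversal preserves the multiset of adjacencies. -/
theorem adjMS_eq_of_symRev (π π' : List (SSym α)) (h : SymRev π π') :
    adjMS π = adjMS π' := by
  obtain ⟨p, m, q, x, rfl, rfl⟩ := h
  have hflank : x :: revneg m ++ [symNeg x] = revneg (x :: m ++ [symNeg x]) := by
    rw [cons_append, revneg_append_singleton, revneg_cons, symNeg_symNeg]
  rw [adjMS_append_cons_append_cons, adjMS_append_cons_append_cons, hflank, adjMS_revneg]
end

section
/- Let x and x' be adjacent black vertices of weight 1 in the intersection graph IG(π, τ). Suppose performing the symmetric reversal on x (and deleting x) splits the component into connected components C₁, …, C_m, with x' in component C_j. Then for any vertex y in a component C_i with i ≠ j, the color of y is the same whether we performed the symmetric reversal on x or instead on x'. -/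
open List

variable {α : Type*}

/-! Reversing on `x` toggles the colours of the neighbours of `x`, reversing on `x'` those of
`x'`. A vertex `y` adjacent to exactly one of `x`, `x'` becomes adjacent to `x'` by rule-II,
so it lies in the component of `x'`; every other `y` is toggled by both or by neither. -/

section ColoredGraph

variable {V : Type*} [DecidableEq V] {G : ColoredGraph V} {x x' y : V}

theorem reverseAt_black_iff (G : ColoredGraph V) (x v : V) :
    (reverseAt G x).black v ↔ (G.adj x v ↔ ¬ G.black v) := by
  simp only [reverseAt]
  tauto

theorem reverseAt_adj_iff_of_adj (hadj : G.adj x x') (hyx' : y ≠ x') :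
    (reverseAt G x).adj y x' ↔ ¬ (G.adj x y ↔ G.adj y x') := by
  simp only [reverseAt]
  tauto

theorem adj_iff_adj_of_not_reach (hadj : G.adj x x') (hyx : y ≠ x) (hx'x : x' ≠ x)
    (hsep : ¬ Reach (reverseAt G x) (· = x) y x') :
    G.adj x y ↔ G.adj y x' := by
  have hyx' : y ≠ x' := by
    rintro rfl
    exact hsep .refl
  by_contra hne
  exact hsep (.single ⟨(reverseAt_adj_iff_of_adj hadj hyx').2 hne, hyx, hx'x⟩)

end ColoredGraph

theorem color_preserved_in_other_component_general {V : Type*} [DecidableEq V]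
    (G : ColoredGraph V) (x x' y : V)
    (hsym : ∀ u v, G.adj u v ↔ G.adj v u)
    (hadj : G.adj x x')
    (hyx : y ≠ x) (hx'x : x' ≠ x)
    (hsep : ¬ Reach (reverseAt G x) (· = x) y x') :
    ((reverseAt G x).black y ↔ (reverseAt G x').black y) := by
  rw [reverseAt_black_iff, reverseAt_black_iff, adj_iff_adj_of_not_reach hadj hyx hx'x hsep,
    hsym y x']

/-- for adjacent black weight-1 vertices `x, x'`, any vertex `y`
lying (after reversing on `x` and deleting `x`) in a component not containing
`x'` gets the same color whether we reverse on `x` or on `x'`. -/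
theorem color_preserved_in_other_component {V : Type*} [DecidableEq V]
    (G : ColoredGraph V) (x x' y : V)
    (hsym : ∀ u v, G.adj u v ↔ G.adj v u) (hirr : ∀ u, ¬ G.adj u u)
    (hadj : G.adj x x') (hbx : G.black x) (hbx' : G.black x')
    (hwx : G.weight x = 1) (hwx' : G.weight x' = 1)
    (hyx : y ≠ x) (hx'x : x' ≠ x)
    (hsep : ¬ Reach (reverseAt G x) (· = x) y x') :
    ((reverseAt G x).black y ↔ (reverseAt G x').black y) :=
  color_preserved_in_other_component_general G x x' y hsym hadj hyx hx'x hsep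
end

section
/- Let x and x' be adjacent black vertices of weight 1 in IG(π, τ). Suppose performing the symmetric reversal on x splits the remaining graph into components C₁,…,C_m with x' ∈ C_j. If y, z are vertices of a component C_i with i ≠ j and y, z are adjacent after reversing on x, then y and z are also adjacent after instead reversing on x'. -/
open List

variable {α : Type*}

/-! Since `y` and `z` are cut off from `x'` once `x` is reversed and deleted, neither is adjacent
to `x'` after the reversal on `x`. As `x'` is a neighbour of `x`, that reversal complements
adjacency to `x'` exactly on the neighbours of `x`, so each of `y`, `z` is adjacent to `x'` in `G`
if and only if it is adjacent to `x`. The reversals on `x` and on `x'` therefore act on the pair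
`{y, z}` in the same way. -/

theorem Reach.ne_and_not_adj_of_not_reach {V : Type*} {G : ColoredGraph V} {dead : V → Prop}
    {u v w : V} (huv : Reach G dead u v) (huw : ¬ Reach G dead u w) (hv : ¬ dead v)
    (hw : ¬ dead w) : v ≠ w ∧ ¬ G.adj v w :=
  ⟨by rintro rfl; exact huw huv, fun h => huw (huv.tail ⟨h, hv, hw⟩)⟩

section reverseAt

variable {V : Type*} [DecidableEq V] {G : ColoredGraph V}

theorem reverseAt_adj_iff_of_adj_iff {x x' y z : V} (hy : G.adj x y ↔ G.adj x' y)
    (hz : G.adj x z ↔ G.adj x' z) : (reverseAt G x).adj y z ↔ (reverseAt G x').adj y z := by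
  simp only [reverseAt, hy, hz]

theorem adj_iff_of_not_reverseAt_adj (hsym : ∀ u v, G.adj u v ↔ G.adj v u) {x x' v : V}
    (hadj : G.adj x x') (hv : v ≠ x') (hnot : ¬ (reverseAt G x).adj v x') :
    G.adj x v ↔ G.adj x' v := by
  simp only [reverseAt] at hnot
  rw [hsym x' v]
  tauto

end reverseAt

theorem adjacency_preserved_in_other_component_general {V : Type*} [DecidableEq V]
    (G : ColoredGraph V) (x x' y z : V)
    (hsym : ∀ u v, G.adj u v ↔ G.adj v u)
    (hadj : G.adj x x')
    (hyx : y ≠ x) (hzx : z ≠ x) (hx'x : x' ≠ x)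
    (hyz : Reach (reverseAt G x) (· = x) y z)
    (hsep : ¬ Reach (reverseAt G x) (· = x) y x') :
    (reverseAt G x).adj y z → (reverseAt G x').adj y z := by
  obtain ⟨hyx', hy⟩ := Reach.ne_and_not_adj_of_not_reach .refl hsep hyx hx'x
  obtain ⟨hzx', hz⟩ := Reach.ne_and_not_adj_of_not_reach hyz hsep hzx hx'x
  exact (reverseAt_adj_iff_of_adj_iff (adj_iff_of_not_reverseAt_adj hsym hadj hyx' hy)
    (adj_iff_of_not_reverseAt_adj hsym hadj hzx' hz)).1

/-- for adjacent black weight-1 vertices `x, x'`, if `y, z` lie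
(after reversing on `x` and deleting `x`) in a common component not containing
`x'` and are adjacent after reversing on `x`, they are also adjacent after
reversing on `x'` instead. -/
theorem adjacency_preserved_in_other_component {V : Type*} [DecidableEq V]
    (G : ColoredGraph V) (x x' y z : V)
    (hsym : ∀ u v, G.adj u v ↔ G.adj v u) (hirr : ∀ u, ¬ G.adj u u)
    (hadj : G.adj x x') (hbx : G.black x) (hbx' : G.black x')
    (hwx : G.weight x = 1) (hwx' : G.weight x' = 1)
    (hyx : y ≠ x) (hzx : z ≠ x) (hx'x : x' ≠ x)
    (hyz : Reach (reverseAt G x) (· = x) y z)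
    (hsep : ¬ Reach (reverseAt G x) (· = x) y x') :
    (reverseAt G x).adj y z → (reverseAt G x').adj y z :=
  adjacency_preserved_in_other_component_general G x x' y z hsym hadj hyx hzx hx'x hyz hsep
end

section
/- In the 2-balanced case, π equals τ if and only if π contains no maximal negative segment, i.e., N_MNS[π] = 0 (equivalently, every adjacency of π is positive). -/
open List

variable {α : Type*}

namespace List

variable {β : Type*}

theorem infix_pair_iff {u v : β} {l : List β} :
    [u, v] <:+: l ↔ ∃ k, l[k]? = some u ∧ l[k + 1]? = some v := by
  rw [infix_iff_getElem?]
  constructor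
  · rintro ⟨k, -, hk⟩
    exact ⟨k, by simpa using hk 0 (by simp), by simpa [Nat.add_comm] using hk 1 (by simp)⟩
  · rintro ⟨k, hu, hv⟩
    have hlen : k + 1 < l.length := (getElem?_eq_some_iff.1 hv).1
    refine ⟨k, by simp only [length_cons, length_nil]; omega, fun i hi => ?_⟩
    match i, hi with
    | 0, _ => simpa using hu
    | 1, _ => simpa [Nat.add_comm] using hv

theorem Nodup.getElem?_succ_of_pair_infix {u v : β} {l : List β} (hl : l.Nodup)
    (h : [u, v] <:+: l) {i : ℕ} (hi : l[i]? = some u) : l[i + 1]? = some v := by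
  obtain ⟨k, hk, hk'⟩ := infix_pair_iff.1 h
  have hlen : k < l.length := (getElem?_eq_some_iff.1 hk).1
  rwa [(getElem?_inj hlen hl).1 (hk.trans hi.symm)] at hk'

/-- Both lists are walks along the successor map of the duplicate-free list `l'`. -/
theorem Nodup.eq_of_forall_pair_infix {l l' : List β} (hl' : l'.Nodup)
    (hlen : l.length = l'.length) (hhead : l[0]? = l'[0]?)
    (h : ∀ u v, [u, v] <:+: l → [u, v] <:+: l') : l = l' := by
  refine ext_getElem? fun i => ?_
  induction i with
  | zero => exact hhead
  | succ i ih =>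
    cases hv : l[i + 1]? with
    | none =>
      rw [getElem?_eq_none_iff] at hv
      rw [eq_comm, getElem?_eq_none_iff]
      omega
    | some v =>
      have hi : i < l.length := by have := (getElem?_eq_some_iff.1 hv).1; omega
      have hu : l[i]? = some l[i] := getElem?_eq_getElem hi
      exact (hl'.getElem?_succ_of_pair_infix (h _ _ (infix_pair_iff.2 ⟨i, hu, hv⟩))
        (ih ▸ hu)).symm

end List

theorem posIn_iff_pair_infix {τ : List (SSym α)} {u v : SSym α} :
    PosIn τ u v ↔ [u, v] <:+: τ :=
  ⟨fun ⟨p, q, h⟩ => ⟨p, q, by simp [h]⟩, fun ⟨p, q, h⟩ => ⟨p, q, by simp [← h]⟩⟩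

theorem card_adjMS : ∀ l : List (SSym α), Multiset.card (adjMS l) = l.length - 1
  | [] | [_] => rfl
  | _ :: v :: rest => by simp [adjMS, card_adjMS (v :: rest)]

theorem IsChromosome.getElem?_zero {r₀ : α} {π : List (SSym α)} (h : IsChromosome r₀ π) :
    π[0]? = some (r₀, true) := by
  obtain ⟨m, rfl⟩ := h
  rfl

theorem IsChromosome.ne_nil {r₀ : α} {π : List (SSym α)} (h : IsChromosome r₀ π) : π ≠ [] := by
  obtain ⟨m, rfl⟩ := h
  simp

theorem BalancedTarget.nodup : ∀ {τ : List (SSym α)}, BalancedTarget τ → τ.Nodup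
  | [], _ => nodup_nil
  | z :: t, h => by
    refine nodup_cons.2 ⟨fun hz => ?_, BalancedTarget.nodup fun p q r x y e => h (z :: p) q r x y
      (by rw [e]; rfl)⟩
    obtain ⟨q, r, rfl⟩ := append_of_mem hz
    exact h [] q r z z rfl rfl rfl

theorem length_eq_of_adjMS_eq {π τ : List (SSym α)} (hπ : π ≠ []) (hτ : τ ≠ [])
    (h : adjMS π = adjMS τ) : π.length = τ.length := by
  have := congrArg Multiset.card h
  rw [card_adjMS, card_adjMS] at this
  have := length_pos_iff.2 hπ
  have := length_pos_iff.2 hτ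
  omega

theorem eq_iff_no_negative_adjacency_general (r₀ : α)
    (π τ : List (SSym α)) (hπ : IsChromosome r₀ π) (hτ : IsChromosome r₀ τ)
    (hbal : BalancedTarget τ) (hA : adjMS π = adjMS τ) :
    π = τ ↔ (∀ (p q : List (SSym α)) (u v : SSym α),
      π = p ++ u :: v :: q → PosIn τ u v) := by
  refine ⟨fun h p q u v hpq => ⟨p, q, h ▸ hpq⟩, fun hpos => ?_⟩
  refine hbal.nodup.eq_of_forall_pair_infix (length_eq_of_adjMS_eq hπ.ne_nil hτ.ne_nil hA)
    (by rw [hπ.getElem?_zero, hτ.getElem?_zero]) fun u v huv => ?_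
  obtain ⟨p, q, hpq⟩ := posIn_iff_pair_infix.2 huv
  exact posIn_iff_pair_infix.1 (hpos p q u v hpq)

/-- in the 2-balanced case, `π = τ` iff every adjacency of `π`
is positive (equivalently `N_MNS[π] = 0`). -/
theorem eq_iff_no_negative_adjacency [DecidableEq α] (r₀ : α)
    (π τ : List (SSym α)) (hπ : IsChromosome r₀ π) (hτ : IsChromosome r₀ τ)
    (hs : Simple π) (hst : Simple τ) (hrel : Related π τ)
    (hdpπ : ∀ c, dpCount c π ≤ 2) (hdpτ : ∀ c, dpCount c τ ≤ 2)
    (hbal : BalancedTarget τ) (hA : adjMS π = adjMS τ) :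
    π = τ ↔ (∀ (p q : List (SSym α)) (u v : SSym α),
      π = p ++ u :: v :: q → PosIn τ u v) :=
  eq_iff_no_negative_adjacency_general r₀ π τ hπ hτ hbal hA
end
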